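/- Let L = ℂ(z, ζ₁, ζ₂) be a differential field of characteristic zero, where z, ζ₁, ζ₂ are algebraically independent over ℂ, the derivation satisfies z′ = 1, ζ₁′ = 1/z, ζ₂′ = ζ₁′/ζ₁ = 1/(zζ₁), and the field of constants of L is ℂ (so L models ℂ(z, log z, log(log z)) with derivation d/dz). Then the only differential subfields of L containing ℂ are ℂ, ℂ(z), ℂ(z, ζ₁), and L; in particular the normal tower of L over ℂ is L ⊃ ℂ(z, ζ₁) ⊃ ℂ(z) ⊃ ℂ. -/

import Mathlib

/-!
Call `t` forced over `F` when it lies in every differential subfield `K ⊇ F` with `t' ∈ K` that is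
not contained in `F`. In the tower `ℂ ⊂ ℂ(z) ⊂ ℂ(z, ζ₁) ⊂ L` every generator is forced over the
previous stage. This gives the four differential subfields at once, and the antiderivative
closures too: an antiderivative `x ∉ F` of an element of `F` forces the next generator into `F(x)`.

Two facts about a differential subfield `K` containing all constants do the work. If `t` is
algebraic over `K` and `t' ∈ K`, then `t ∈ K`: differentiating the minimal polynomial
`Xⁿ + a Xⁿ⁻¹ + ⋯` of `t` shows that `a + n t` is a constant. If `t' ∈ K` and `t ∉ K`, then no
element of `K(t)` has derivative `t' / t`, which has a simple pole at `t = 0`. As `ζ₂' = ζ₁' / ζ₁`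
and `ζ₁' = z' / z`, the second fact carries forcing down the tower from its top step, where it is
the first fact.
-/

/-- A derivation on a field: an additive map satisfying the Leibniz rule. -/
def IsDeriv {E : Type*} [Field E] (D : E → E) : Prop :=
  (∀ x y : E, D (x + y) = D x + D y) ∧ ∀ x y : E, D (x * y) = D x * y + x * D y

/-- A subfield closed under the derivation, i.e. a differential subfield. -/
def IsDiffSubfield {E : Type*} [Field E] (D : E → E) (K : Subfield E) : Prop :=
  ∀ x ∈ K, D x ∈ K

/-- The subfield generated by a subfield `F` together with a set `S`, i.e. `F(S)`. -/
def adjoinSF {E : Type*} [Field E] (F : Subfield E) (S : Set E) : Subfield E :=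
  Subfield.closure (↑F ∪ S)

/-- `ζ 0, …, ζ (n-1)` are iterated antiderivatives of `F`:
`(ζ i)' ∈ F(ζ 0, …, ζ (i-1))` for every `i`. -/
def IsIterAntideriv {E : Type*} [Field E] (D : E → E) (F : Subfield E) {n : ℕ}
    (ζ : Fin n → E) : Prop :=
  ∀ i, D (ζ i) ∈ adjoinSF F (ζ '' {j | j < i})

/-- `M` is a no new constants extension of `K`: the constants of `M` are exactly
the constants of `K`. -/
def NoNewConstants {E : Type*} [Field E] (D : E → E) (K M : Subfield E) : Prop :=
  K ≤ M ∧ ∀ x ∈ M, D x = 0 → x ∈ K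

/-- `K` is an iterated antiderivative extension of `F`. -/
def IsIAE {E : Type*} [Field E] (D : E → E) (F K : Subfield E) : Prop :=
  NoNewConstants D F K ∧
    ∃ (n : ℕ) (ζ : Fin n → E), IsIterAntideriv D F ζ ∧ K = adjoinSF F (Set.range ζ)

/-- `K` is an antiderivative extension of `F`. -/
def IsAE {E : Type*} [Field E] (D : E → E) (F K : Subfield E) : Prop :=
  NoNewConstants D F K ∧
    ∃ (n : ℕ) (ζ : Fin n → E), (∀ i, D (ζ i) ∈ (F : Set E)) ∧ K = adjoinSF F (Set.range ζ)

/-- A differential automorphism of `E` over `F`: a field automorphism fixing `F`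
pointwise and commuting with the derivation. -/
def IsDiffAut {E : Type*} [Field E] (D : E → E) (F : Subfield E) (σ : E ≃+* E) : Prop :=
  (∀ x ∈ F, σ x = x) ∧ ∀ y : E, σ (D y) = D (σ y)

/-- `M` is a minimal differential field extension of `K`. -/
def IsMinimalDiffExt {E : Type*} [Field E] (D : E → E) (K M : Subfield E) : Prop :=
  IsDiffSubfield D M ∧ K < M ∧
    ∀ L : Subfield E, IsDiffSubfield D L → K ≤ L → L ≤ M → L = K ∨ L = M

/-- The field of constants of a differential subfield `F`. -/
def constantsOf {E : Type*} [Field E] (D : E → E) (hD : IsDeriv D) (F : Subfield E) :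
    Subfield E where
  carrier := {x : E | x ∈ F ∧ D x = 0}
  zero_mem' := by
    refine ⟨F.zero_mem, ?_⟩
    have h := hD.1 0 0
    simp only [add_zero] at h
    exact left_eq_add.mp h
  one_mem' := by
    refine ⟨F.one_mem, ?_⟩
    have h := hD.2 1 1
    simp only [mul_one, one_mul] at h
    exact left_eq_add.mp h
  add_mem' := by
    rintro a b ⟨haF, ha⟩ ⟨hbF, hb⟩
    exact ⟨F.add_mem haF hbF, by rw [hD.1 a b, ha, hb, add_zero]⟩
  mul_mem' := by
    rintro a b ⟨haF, ha⟩ ⟨hbF, hb⟩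
    exact ⟨F.mul_mem haF hbF, by rw [hD.2 a b, ha, hb, zero_mul, mul_zero, add_zero]⟩
  neg_mem' := by
    rintro a ⟨haF, ha⟩
    refine ⟨F.neg_mem haF, ?_⟩
    have h0 : D 0 = 0 := by
      have h := hD.1 0 0
      simp only [add_zero] at h
      exact left_eq_add.mp h
    have h := hD.1 a (-a)
    rw [add_neg_cancel, h0, ha, zero_add] at h
    exact h.symm
  inv_mem' := by
    rintro a ⟨haF, ha⟩
    refine ⟨F.inv_mem haF, ?_⟩
    by_cases h0 : a = 0
    · subst h0; rw [inv_zero]; exact ha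
    · have h1 : D 1 = 0 := by
        have h := hD.2 1 1
        simp only [mul_one, one_mul] at h
        exact left_eq_add.mp h
      have h := hD.2 a a⁻¹
      rw [mul_inv_cancel₀ h0, h1, ha, zero_mul, zero_add] at h
      rcases mul_eq_zero.mp h.symm with h' | h'
      · exact absurd h' h0
      · exact h'

/-- The antiderivative closure of `L` in `E`: the subfield generated over `L`
by all antiderivatives of `L` lying in `E`. -/
def adCl {E : Type*} [Field E] (D : E → E) (L : Subfield E) : Subfield E :=
  adjoinSF L {x : E | D x ∈ L}

/-- The differential subfield generated by `F` and `u`, i.e. `F⟨u⟩ = F(u, u', u'', …)`. -/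
def diffAdjoin {E : Type*} [Field E] (D : E → E) (F : Subfield E) (u : E) : Subfield E :=
  sInf {M : Subfield E | IsDiffSubfield D M ∧ F ≤ M ∧ u ∈ M}

/-- The transcendence degree of `K` over `F` (both viewed inside an ambient field `E`):
the supremum of cardinalities of subsets of `K` that are algebraically independent
over `F`. -/
noncomputable def trdegSF {E : Type*} [Field E] (F K : Subfield E) : Cardinal :=
  ⨆ s : {s : Set E // s ⊆ (K : Set E) ∧ AlgebraicIndependent F ((↑) : s → E)},
    Cardinal.mk s.1

open Polynomial

section

variable {L : Type*} [Field L] {D : L → L}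

def IsDeriv.toDerivation (hD : IsDeriv D) : Derivation ℤ L L :=
  Derivation.mk' (AddMonoidHom.mk' D hD.1).toIntLinearMap fun a b => by
    simp [hD.2, smul_eq_mul]; ring

@[simp]
theorem IsDeriv.toDerivation_apply (hD : IsDeriv D) (x : L) : hD.toDerivation x = D x := rfl

def IsDiffSubfield.toDerivation (hD : IsDeriv D) {K : Subfield L} (hK : IsDiffSubfield D K) :
    Derivation ℤ K K :=
  Derivation.mk' (AddMonoidHom.mk' (fun a : K => (⟨D a, hK a a.2⟩ : K))
    fun a b => Subtype.ext (hD.1 a b)).toIntLinearMap fun a b => Subtype.ext (by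
      simp [hD.2, smul_eq_mul]; ring)

section Adjoin

variable {F K M : Subfield L} {S : Set L}

theorem le_adjoinSF (F : Subfield L) (S : Set L) : F ≤ adjoinSF F S :=
  fun _ hx => Subfield.subset_closure (Or.inl hx)

theorem subset_adjoinSF (F : Subfield L) (S : Set L) : S ⊆ adjoinSF F S :=
  fun _ hx => Subfield.subset_closure (Or.inr hx)

theorem adjoinSF_le (hF : F ≤ K) (hS : S ⊆ K) : adjoinSF F S ≤ K :=
  Subfield.closure_le.2 (Set.union_subset hF hS)

theorem mem_adjoinSF_singleton_self (F : Subfield L) (t : L) : t ∈ adjoinSF F {t} :=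
  subset_adjoinSF F {t} rfl

theorem adjoinSF_empty (F : Subfield L) : adjoinSF F ∅ = F := by
  rw [adjoinSF, Set.union_empty, Subfield.closure_eq]

theorem adjoinSF_insert (F : Subfield L) (x : L) (S : Set L) :
    adjoinSF F (insert x S) = adjoinSF (adjoinSF F {x}) S := by
  apply le_antisymm
  · refine adjoinSF_le ((le_adjoinSF F {x}).trans (le_adjoinSF _ S)) (Set.insert_subset ?_ ?_)
    · exact le_adjoinSF _ S (mem_adjoinSF_singleton_self F x)
    · exact subset_adjoinSF _ S
  · refine adjoinSF_le (adjoinSF_le (le_adjoinSF F _) ?_) ?_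
    · exact Set.singleton_subset_iff.2 (subset_adjoinSF F _ (Set.mem_insert x S))
    · exact (Set.subset_insert x S).trans (subset_adjoinSF F _)

theorem isDiffSubfield_adjoinSF (hD : IsDeriv D) (hF : IsDiffSubfield D F)
    (hS : ∀ s ∈ S, D s ∈ adjoinSF F S) : IsDiffSubfield D (adjoinSF F S) := by
  intro x hx
  induction hx using Subfield.closure_induction with
  | mem x hx => exact hx.elim (fun hxF => le_adjoinSF F S (hF x hxF)) (hS x)
  | one => rw [← hD.toDerivation_apply, Derivation.map_one_eq_zero]; exact zero_mem _
  | add x y _ _ hx hy => rw [hD.1]; exact add_mem hx hy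
  | neg x _ hx =>
    rw [← hD.toDerivation_apply, map_neg, hD.toDerivation_apply]; exact neg_mem hx
  | inv x hx' hx =>
    rw [← hD.toDerivation_apply, Derivation.leibniz_inv, smul_eq_mul]
    exact mul_mem (neg_mem (pow_mem (inv_mem hx') 2)) hx
  | mul x y hx' hy' hx hy =>
    rw [hD.2]; exact add_mem (mul_mem hx hy') (mul_mem hx' hy)

theorem isDiffSubfield_adjoinSF_singleton (hD : IsDeriv D) (hF : IsDiffSubfield D F) {t : L}
    (ht : D t ∈ F) : IsDiffSubfield D (adjoinSF F {t}) :=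
  isDiffSubfield_adjoinSF hD hF (by simpa using le_adjoinSF F {t} ht)

theorem adjoinSF_eq_toSubfield_adjoin (F : Subfield L) (S : Set L) :
    adjoinSF F S = (IntermediateField.adjoin F S).toSubfield := by
  rw [IntermediateField.adjoin_toSubfield, adjoinSF, ← Subtype.range_coe (s := (F : Set L))]
  rfl

theorem mem_adjoinSF_singleton_iff {t x : L} :
    x ∈ adjoinSF F {t} ↔ ∃ p q : F[X], x = aeval t p / aeval t q := by
  rw [adjoinSF_eq_toSubfield_adjoin, IntermediateField.mem_toSubfield,
    IntermediateField.mem_adjoin_simple_iff]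

theorem AlgebraicIndependent.notMem_adjoinSF {ι : Type*} {x : ι → L}
    (hx : AlgebraicIndependent F x) {s : Set ι} {i : ι} (hi : i ∉ s) :
    x i ∉ adjoinSF F (x '' s) := by
  rw [adjoinSF_eq_toSubfield_adjoin]
  intro h
  exact IntermediateField.transcendental_adjoin_iff.2 (hx.transcendental_adjoin hi)
    (isAlgebraic_algebraMap (⟨x i, h⟩ : IntermediateField.adjoin F (x '' s)))

theorem AlgebraicIndependent.notMem_adjoinSF_of_fin_three {a b c : L}
    (h : AlgebraicIndependent F ![a, b, c]) :
    a ∉ F ∧ b ∉ adjoinSF F {a} ∧ c ∉ adjoinSF F {a, b} := by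
  refine ⟨?_, ?_, ?_⟩
  · simpa [adjoinSF_empty] using h.notMem_adjoinSF (s := ∅) (i := 0) (Set.notMem_empty _)
  · simpa using h.notMem_adjoinSF (s := {0}) (i := 1) (by simp)
  · simpa [Set.image_insert_eq] using h.notMem_adjoinSF (s := {0, 1}) (i := 2) (by simp)

/-- If `u = p(t) / q(t)` lies outside `F`, then `t` is a root of `p - u q ≠ 0`. -/
theorem isAlgebraic_of_mem_adjoinSF_singleton {t u : L} (hu : u ∈ adjoinSF F {t})
    (huF : u ∉ F) (hFM : F ≤ M) (huM : u ∈ M) : IsAlgebraic M t := by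
  obtain ⟨p, q, rfl⟩ := mem_adjoinSF_singleton_iff.1 hu
  have hq : aeval t q ≠ 0 := fun h => huF (by rw [h, div_zero]; exact F.zero_mem)
  have hq0 : q ≠ 0 := by rintro rfl; simp at hq
  set j := Subfield.inclusion hFM
  have haeval : ∀ r : F[X], aeval t (r.map j) = aeval t r := fun r => by
    rw [aeval_def, aeval_def, eval₂_map]; rfl
  refine ⟨p.map j - C ⟨_, huM⟩ * q.map j, ?_, ?_⟩
  · intro h
    have hcoeff := congrArg (fun r => ((r.coeff q.natDegree : M) : L)) (sub_eq_zero.1 h)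
    simp only [coeff_map, coeff_C_mul, Subfield.coe_mul] at hcoeff
    have hlead : (q.leadingCoeff : L) ≠ 0 := by simpa using hq0
    rw [show aeval t p / aeval t q = p.coeff q.natDegree / q.leadingCoeff by
      rw [eq_div_iff hlead]; exact hcoeff.symm] at huF
    exact huF (div_mem (p.coeff _).2 q.leadingCoeff.2)
  · rw [map_sub, map_mul, haeval, haeval, aeval_C]
    exact sub_eq_zero.2 (div_mul_cancel₀ _ hq).symm

end Adjoin

section LiftDeriv

variable (hD : IsDeriv D) {K : Subfield L} (hK : IsDiffSubfield D K)

noncomputable def liftDeriv (w : K) : Derivation ℤ K[X] K[X] :=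
  letI : Differential K := ⟨hK.toDerivation hD⟩
  Differential.implicitDeriv (C w)

theorem coeff_liftDeriv (w : K) (p : K[X]) (i : ℕ) :
    ((liftDeriv hD hK w p).coeff i : L) = D (p.coeff i) + p.coeff (i + 1) * (i + 1) * w := by
  simp [liftDeriv, Differential.implicitDeriv, IsDiffSubfield.toDerivation, coeff_derivative]
  ring

theorem deriv_aeval {w : K} {t : L} (ht : D t = w) (p : K[X]) :
    D (aeval t p) = aeval t (liftDeriv hD hK w p) := by
  let _ : Differential K := ⟨hK.toDerivation hD⟩
  let _ : Differential L := ⟨hD.toDerivation⟩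
  have : DifferentialAlgebra K L := ⟨fun _ => rfl⟩
  exact Differential.deriv_aeval_eq_implicitDeriv t (C w) (by rw [aeval_C]; exact ht) p

theorem degree_liftDeriv_lt (w : K) {p : K[X]} (hp : p.Monic) :
    (liftDeriv hD hK w p).degree < p.degree := by
  rw [degree_eq_natDegree hp.ne_zero, degree_lt_iff_coeff_zero]
  intro m hm
  have hconst : D (p.coeff m) = 0 := by
    rcases hm.eq_or_lt with rfl | hm
    · rw [hp.coeff_natDegree, OneMemClass.coe_one, ← hD.toDerivation_apply,
        Derivation.map_one_eq_zero]
    · rw [coeff_eq_zero_of_natDegree_lt hm, ZeroMemClass.coe_zero, ← hD.toDerivation_apply,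
        map_zero]
  apply Subtype.ext
  rw [coeff_liftDeriv, hconst, coeff_eq_zero_of_natDegree_lt (by omega)]
  simp

end LiftDeriv

theorem mem_of_isAlgebraic_of_deriv_mem [CharZero L] (hD : IsDeriv D) {K : Subfield L}
    (hK : IsDiffSubfield D K) (hconst : ∀ x, D x = 0 → x ∈ K) {t : L} (halg : IsAlgebraic K t)
    (ht : D t ∈ K) : t ∈ K := by
  have hint := halg.isIntegral
  set p := minpoly K t
  set n := p.natDegree
  have hn : 0 < n := minpoly.natDegree_pos hint
  have hδ : liftDeriv hD hK ⟨D t, ht⟩ p = 0 := by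
    by_contra hne
    refine (degree_liftDeriv_lt hD hK _ (minpoly.monic hint)).not_ge
      (minpoly.degree_le_of_ne_zero K t hne ?_)
    rw [← deriv_aeval hD hK rfl, minpoly.aeval, ← hD.toDerivation_apply, map_zero]
  have hc : D (p.coeff (n - 1) + n * t) = 0 := by
    have h := coeff_liftDeriv hD hK ⟨D t, ht⟩ p (n - 1)
    rw [hδ, coeff_zero, Nat.sub_add_cancel hn, (minpoly.monic hint).coeff_natDegree] at h
    rw [hD.1, hD.2, ← hD.toDerivation_apply (n : L), Derivation.map_natCast]
    push_cast [Nat.cast_sub hn] at h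
    linear_combination -h
  have hnt : (n : L) * t ∈ K := by
    simpa using K.sub_mem (hconst _ hc) (p.coeff (n - 1)).2
  simpa [Nat.pos_iff_ne_zero.1 hn] using K.mul_mem (K.inv_mem (natCast_mem K n)) hnt

theorem Polynomial.exists_eq_X_pow_mul_eval_zero_ne_zero {R : Type*} [CommRing R] {p : R[X]}
    (hp : p ≠ 0) : ∃ (a : ℕ) (p₀ : R[X]), p = X ^ a * p₀ ∧ p₀.eval 0 ≠ 0 := by
  obtain ⟨p₀, h, hdvd⟩ := p.exists_eq_pow_rootMultiplicity_mul_and_not_dvd hp 0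
  rw [C_0, sub_zero] at h hdvd
  exact ⟨_, p₀, h, by rwa [X_dvd_iff, coeff_zero_eq_eval_zero] at hdvd⟩

/-- Write `x = t ^ a p₀(t) / (t ^ b q₀(t))` with `p₀(0), q₀(0) ≠ 0` and take `k = b - a`. -/
theorem exists_mul_pow_mul_aeval_eq_aeval {K : Subfield L} {t x : L} (ht : t ≠ 0)
    (hx : x ∈ adjoinSF K {t}) : ∃ (k : ℕ) (P Q : K[X]),
      Q.eval 0 ≠ 0 ∧ (k = 0 ∨ P.eval 0 ≠ 0) ∧ x * t ^ k * aeval t Q = aeval t P := by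
  obtain ⟨p, q, rfl⟩ := mem_adjoinSF_singleton_iff.1 hx
  by_cases hpq : aeval t p = 0 ∨ aeval t q = 0
  · refine ⟨0, 0, 1, by simp, Or.inl rfl, ?_⟩
    rcases hpq with h | h <;> simp [h]
  rw [not_or] at hpq
  obtain ⟨a, p₀, rfl, hp₀⟩ := exists_eq_X_pow_mul_eval_zero_ne_zero fun h : p = 0 => by
    simp [h] at hpq
  obtain ⟨b, q₀, rfl, hq₀⟩ := exists_eq_X_pow_mul_eval_zero_ne_zero fun h : q = 0 => by
    simp [h] at hpq
  simp only [map_mul, map_pow, aeval_X, ne_eq, mul_eq_zero, not_or] at hpq ⊢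
  rcases le_total b a with hba | hab
  · obtain ⟨c, rfl⟩ := Nat.exists_eq_add_of_le hba
    refine ⟨0, X ^ c * p₀, q₀, hq₀, Or.inl rfl, ?_⟩
    rw [map_mul, map_pow, aeval_X, pow_add]
    field_simp [hpq.2.1, hpq.2.2]
  · obtain ⟨c, rfl⟩ := Nat.exists_eq_add_of_le hab
    refine ⟨c, p₀, q₀, hq₀, Or.inr hp₀, ?_⟩
    rw [pow_add]
    field_simp [hpq.2.1, hpq.2.2]

/-- Clearing denominators in `(x tᵏ Q(t))' = P(t)'` and evaluating at `t = 0` leaves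
`g Q(0)² = 0` if `k = 0` and `k t' P(0) Q(0) = 0` otherwise. -/
theorem deriv_ne_div_of_transcendental [CharZero L] (hD : IsDeriv D) {K : Subfield L}
    (hK : IsDiffSubfield D K) {t x g : L} (htr : Transcendental K t) (ht : D t ∈ K)
    (ht0 : D t ≠ 0) (hg : g ∈ K) (hg0 : g ≠ 0) (hx : x ∈ adjoinSF K {t}) :
    D x ≠ g / t := by
  intro hDx
  have htne : t ≠ 0 := fun h => htr (h ▸ isAlgebraic_zero)
  obtain ⟨k, P, Q, hQ, hP, hxPQ⟩ := exists_mul_pow_mul_aeval_eq_aeval htne hx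
  set w : K := ⟨D t, ht⟩
  have hpow : t * D (t ^ k) = k * t ^ k * D t := by
    rw [← hD.toDerivation_apply, Derivation.leibniz_pow, hD.toDerivation_apply]
    rcases k with _ | k
    · simp
    · simp only [nsmul_eq_mul, smul_eq_mul, Nat.add_sub_cancel, pow_succ]; ring
  have hL : t * aeval t Q * D (aeval t P) =
      g * t ^ k * aeval t Q ^ 2 + k * D t * aeval t P * aeval t Q +
        t * aeval t P * D (aeval t Q) := by
    rw [← hxPQ, hD.2, hD.2, hDx]
    field_simp
    linear_combination (x * aeval t Q ^ 2) * hpow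
  have hpoly : X * Q * liftDeriv hD hK w P =
      C ⟨g, hg⟩ * X ^ k * Q ^ 2 + C (k * w) * P * Q + X * P * liftDeriv hD hK w Q := by
    apply transcendental_iff_injective.1 htr
    have hw : D t = w := rfl
    simp only [map_mul, map_add, map_pow, aeval_X, aeval_C, map_natCast,
      ← deriv_aeval hD hK hw]
    exact hL
  have h0 := congrArg (eval 0) hpoly
  simp only [eval_mul, eval_add, eval_pow, eval_X, eval_C, zero_mul] at h0
  rcases Nat.eq_zero_or_pos k with rfl | hk
  · have hgK : (⟨g, hg⟩ : K) ≠ 0 := fun h => hg0 (congrArg Subtype.val h)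
    simp [hgK, hQ] at h0
  · have hw0 : w ≠ 0 := fun h => ht0 (congrArg Subtype.val h)
    simp [zero_pow hk.ne', hk.ne', hw0, hQ, hP.resolve_left hk.ne'] at h0

section Forced

def IsForcedOver (D : L → L) (F : Subfield L) (t : L) : Prop :=
  ∀ K : Subfield L, IsDiffSubfield D K → F ≤ K → D t ∈ K → ¬ K ≤ F → t ∈ K

variable {F K : Subfield L} {s t : L}

theorem IsForcedOver.eq_or_adjoinSF_le (h : IsForcedOver D F t) (hK : IsDiffSubfield D K)
    (hFK : F ≤ K) (ht : D t ∈ F) : K = F ∨ adjoinSF F {t} ≤ K := by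
  by_cases hKF : K ≤ F
  · exact Or.inl (le_antisymm hKF hFK)
  · exact Or.inr (adjoinSF_le hFK (Set.singleton_subset_iff.2 (h K hK hFK (hFK ht) hKF)))

variable [CharZero L] (hD : IsDeriv D)
include hD

theorem notMem_adjoinSF_of_deriv_eq_div (hK : IsDiffSubfield D K)
    (hconst : ∀ x, D x = 0 → x ∈ K) (ht : D t ∈ K) (htK : t ∉ K) (hs : D s = D t / t) :
    s ∉ adjoinSF K {t} := fun hsK =>
  deriv_ne_div_of_transcendental hD hK
    (fun halg => htK (mem_of_isAlgebraic_of_deriv_mem hD hK hconst halg ht)) ht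
    (fun h => htK (hconst t h)) ht (fun h => htK (hconst t h)) hsK hs

theorem mem_of_mem_adjoinSF_singleton_of_notMem (hconst : ∀ x, D x = 0 → x ∈ F)
    (hK : IsDiffSubfield D K) (hFK : F ≤ K) (ht : D t ∈ K) {u : L} (huK : u ∈ K)
    (hu : u ∈ adjoinSF F {t}) (huF : u ∉ F) : t ∈ K :=
  mem_of_isAlgebraic_of_deriv_mem hD hK (fun x hx => hFK (hconst x hx))
    (isAlgebraic_of_mem_adjoinSF_singleton hu huF hFK huK) ht

theorem isForcedOver_of_adjoinSF_eq_top (hconst : ∀ x, D x = 0 → x ∈ F)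
    (htop : adjoinSF F {t} = ⊤) : IsForcedOver D F t := by
  intro K hK hFK ht hKF
  obtain ⟨u, huK, huF⟩ := SetLike.not_le_iff_exists.1 hKF
  exact mem_of_mem_adjoinSF_singleton_of_notMem hD hconst hK hFK ht huK
    (htop ▸ Subfield.mem_top u) huF

/-- A differential field `K ⊇ F` avoiding `t` either meets `F(t)` outside `F`, which makes `t`
algebraic over `K`, or meets `L` outside `F(t)`, which forces `s = log t` into `K(t)`. -/
theorem IsForcedOver.of_adjoinSF (hconst : ∀ x, D x = 0 → x ∈ F)
    (hs : IsForcedOver D (adjoinSF F {t}) s) (hst : D s = D t / t) : IsForcedOver D F t := by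
  intro K hK hFK ht hKF
  by_contra htK
  obtain ⟨u, huK, huF⟩ := SetLike.not_le_iff_exists.1 hKF
  by_cases hu : u ∈ adjoinSF F {t}
  · exact htK (mem_of_mem_adjoinSF_singleton_of_notMem hD hconst hK hFK ht huK hu huF)
  have hsK : s ∈ adjoinSF K {t} := by
    refine hs _ (isDiffSubfield_adjoinSF_singleton hD hK ht)
      (adjoinSF_le (hFK.trans (le_adjoinSF K {t})) (subset_adjoinSF K {t})) ?_
      fun h => hu (h (le_adjoinSF K {t} huK))
    rw [hst]
    exact div_mem (le_adjoinSF K {t} ht) (mem_adjoinSF_singleton_self K t)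
  exact notMem_adjoinSF_of_deriv_eq_div hD hK (fun x hx => hFK (hconst x hx)) ht htK hst hsK

theorem IsForcedOver.adCl_eq (h : IsForcedOver D F t) (hconst : ∀ x, D x = 0 → x ∈ F)
    (hF : IsDiffSubfield D F) (ht : D t ∈ F) (htF : t ∉ F) : adCl D F = adjoinSF F {t} := by
  refine le_antisymm (adjoinSF_le (le_adjoinSF F {t}) fun x hx => ?_)
    (adjoinSF_le (le_adjoinSF F _) (Set.singleton_subset_iff.2 (subset_adjoinSF F _ ht)))
  replace hx : D x ∈ F := hx
  by_cases hxF : x ∈ F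
  · exact le_adjoinSF F {t} hxF
  have htx : t ∈ adjoinSF F {x} :=
    h _ (isDiffSubfield_adjoinSF_singleton hD hF hx) (le_adjoinSF F {x}) (le_adjoinSF F {x} ht)
      fun hle => hxF (hle (mem_adjoinSF_singleton_self F x))
  exact mem_of_mem_adjoinSF_singleton_of_notMem hD hconst
    (isDiffSubfield_adjoinSF_singleton hD hF ht) (le_adjoinSF F {t}) (le_adjoinSF F {t} hx)
    (mem_adjoinSF_singleton_self F t) htx htF

end Forced

end

/-- `L = ℂ(z, ζ₁, ζ₂)` models `ℂ(z, log z, log(log z))` with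
`z' = 1`, `ζ₁' = 1/z`, `ζ₂' = 1/(zζ₁)`, constants `ℂ`, and `z, ζ₁, ζ₂`
algebraically independent over `ℂ`. Then the only differential subfields of `L`
containing `ℂ` are `ℂ`, `ℂ(z)`, `ℂ(z,ζ₁)` and `L`; the normal tower of `L` over
`ℂ` is `L ⊃ ℂ(z,ζ₁) ⊃ ℂ(z) ⊃ ℂ`. -/
theorem statement12 {L : Type*} [Field L] (D : L → L) (hD : IsDeriv D)
    (ι : ℂ →+* L) (hι : ∀ c : ℂ, D (ι c) = 0)
    (z ζ₁ ζ₂ : L)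
    (hz : D z = 1) (hζ₁ : D ζ₁ = z⁻¹) (hζ₂ : D ζ₂ = (z * ζ₁)⁻¹)
    (halg : AlgebraicIndependent ι.fieldRange ![z, ζ₁, ζ₂])
    (hconst : ∀ x : L, D x = 0 → x ∈ ι.fieldRange)  -- the constants of L are ℂ
    (hgen : adjoinSF ι.fieldRange {z, ζ₁, ζ₂} = ⊤) :
    (∀ K : Subfield L, IsDiffSubfield D K → ι.fieldRange ≤ K →
      K = ι.fieldRange ∨ K = adjoinSF ι.fieldRange {z} ∨
        K = adjoinSF ι.fieldRange {z, ζ₁} ∨ K = ⊤) ∧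
    adCl D ι.fieldRange = adjoinSF ι.fieldRange {z} ∧
    adCl D (adjoinSF ι.fieldRange {z}) = adjoinSF ι.fieldRange {z, ζ₁} ∧
    adCl D (adjoinSF ι.fieldRange {z, ζ₁}) = (⊤ : Subfield L) := by
  have : CharZero L := charZero_of_injective_ringHom ι.injective
  obtain ⟨hz₀, hζ₁₀, hζ₂₀⟩ := halg.notMem_adjoinSF_of_fin_three
  rw [adjoinSF_insert] at hgen hζ₂₀ ⊢
  rw [adjoinSF_insert] at hgen
  set C := ι.fieldRange
  set F₁ := adjoinSF C {z}
  set F₂ := adjoinSF F₁ {ζ₁}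
  have hC : IsDiffSubfield D C := by rintro _ ⟨c, rfl⟩; rw [hι]; exact C.zero_mem
  have hzC : D z ∈ C := hz ▸ C.one_mem
  have hF₁ : IsDiffSubfield D F₁ := isDiffSubfield_adjoinSF_singleton hD hC hzC
  have hζ₁F₁ : D ζ₁ ∈ F₁ := hζ₁ ▸ inv_mem (mem_adjoinSF_singleton_self C z)
  have hF₂ : IsDiffSubfield D F₂ := isDiffSubfield_adjoinSF_singleton hD hF₁ hζ₁F₁
  have hζ₂F₂ : D ζ₂ ∈ F₂ := hζ₂ ▸ inv_mem (mul_mem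
    (le_adjoinSF F₁ _ (mem_adjoinSF_singleton_self C z)) (mem_adjoinSF_singleton_self F₁ ζ₁))
  have hconst₁ : ∀ x, D x = 0 → x ∈ F₁ := fun x hx => le_adjoinSF C _ (hconst x hx)
  have hconst₂ : ∀ x, D x = 0 → x ∈ F₂ := fun x hx => le_adjoinSF F₁ _ (hconst₁ x hx)
  have h₂ : IsForcedOver D F₂ ζ₂ := isForcedOver_of_adjoinSF_eq_top hD hconst₂ hgen
  have h₁ : IsForcedOver D F₁ ζ₁ :=
    h₂.of_adjoinSF hD hconst₁ (by rw [hζ₂, hζ₁, mul_inv, div_eq_mul_inv])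
  have h₀ : IsForcedOver D C z := h₁.of_adjoinSF hD hconst (by rw [hζ₁, hz, one_div])
  refine ⟨fun K hK hCK => ?_, h₀.adCl_eq hD hconst hC hzC hz₀,
    h₁.adCl_eq hD hconst₁ hF₁ hζ₁F₁ hζ₁₀,
    (h₂.adCl_eq hD hconst₂ hF₂ hζ₂F₂ hζ₂₀).trans hgen⟩
  rcases h₀.eq_or_adjoinSF_le hK hCK hzC with h | hF₁K
  · exact Or.inl h
  rcases h₁.eq_or_adjoinSF_le hK hF₁K hζ₁F₁ with h | hF₂K
  · exact Or.inr (Or.inl h)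
  rcases h₂.eq_or_adjoinSF_le hK hF₂K hζ₂F₂ with h | hK
  · exact Or.inr (Or.inr (Or.inl h))
  · exact Or.inr (Or.inr (Or.inr (top_le_iff.1 (hgen ▸ hK))))
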